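/- arXiv:2110.03746 — 4 statements merged into one kernel-verified Lean document; each statement's English description precedes it below -/
import Mathlib

section
/- Let n be a positive integer and x ∈ ℤ/nℤ a nonzero element of additive order δ. Then the stabilizer of x under multiplication by units, {g ∈ (ℤ/nℤ)ˣ : g·x = x}, equals {g ∈ (ℤ/nℤ)ˣ : g ≡ 1 (mod δ)}, and has cardinality φ(n)/φ(δ). -/
theorem stmt_9 (n δ : ℕ) (hn : 0 < n) (x : ZMod n) (hx : x ≠ 0)
    (hord : addOrderOf x = δ) :
    {g : (ZMod n)ˣ | (g : ZMod n) * x = x} =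
      {g : (ZMod n)ˣ | (((g : ZMod n).val : ZMod δ)) = 1} ∧
    Nat.card {g : (ZMod n)ˣ // (g : ZMod n) * x = x} =
      Nat.totient n / Nat.totient δ := by
  have : NeZero n := ⟨hn.ne'⟩
  have hδn : δ ∣ n := by
    rw [← hord, addOrderOf_dvd_iff_nsmul_eq_zero, nsmul_eq_mul, ZMod.natCast_self, zero_mul]
  have hδ0 : δ ≠ 0 := by rw [← hord]; exact (addOrderOf_pos x).ne'
  have : NeZero δ := ⟨hδ0⟩
  have hcast : ∀ a : ZMod n, ((a.val : ZMod δ)) = ZMod.castHom hδn (ZMod δ) a := by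
    intro a
    rw [ZMod.natCast_val, ZMod.castHom_apply]
  have key : ∀ g : (ZMod n)ˣ, ((g : ZMod n) * x = x) ↔ (((g : ZMod n).val : ZMod δ) = 1) := by
    intro g
    have h1 : ((g : ZMod n) * x = x) ↔ ((g : ZMod n) - 1) * x = 0 := by
      rw [sub_mul, one_mul, sub_eq_zero]
    have h2 : ((g : ZMod n) - 1) * x = (((g : ZMod n) - 1).val : ZMod n) * x := by
      rw [ZMod.natCast_val, ZMod.cast_id]
    rw [h1, h2, ← nsmul_eq_mul, ← addOrderOf_dvd_iff_nsmul_eq_zero, hord,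
      ← ZMod.natCast_eq_zero_iff _ δ, hcast, map_sub, map_one, sub_eq_zero, ← hcast]
  refine ⟨Set.ext fun g => key g, ?_⟩
  -- cardinality
  have hker : ∀ g : (ZMod n)ˣ, ((g : ZMod n) * x = x) ↔ g ∈ (ZMod.unitsMap hδn).ker := by
    intro g
    rw [key g, MonoidHom.mem_ker, ZMod.unitsMap, hcast]
    constructor
    · intro h
      ext
      simpa using h
    · intro h
      simpa using congrArg (Units.val) h
  have e : {g : (ZMod n)ˣ // (g : ZMod n) * x = x} ≃ (ZMod.unitsMap hδn).ker :=
    Equiv.subtypeEquivRight hker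
  rw [Nat.card_congr e]
  have hsurj := ZMod.unitsMap_surjective hδn
  have h1 : Nat.card (ZMod n)ˣ = Nat.card ((ZMod n)ˣ ⧸ (ZMod.unitsMap hδn).ker) *
      Nat.card (ZMod.unitsMap hδn).ker := Subgroup.card_eq_card_quotient_mul_card_subgroup _
  have h2 : Nat.card ((ZMod n)ˣ ⧸ (ZMod.unitsMap hδn).ker) = Nat.card (ZMod δ)ˣ :=
    Nat.card_congr (QuotientGroup.quotientKerEquivOfSurjective _ hsurj).toEquiv
  rw [h2] at h1
  rw [← ZMod.card_units_eq_totient n, ← ZMod.card_units_eq_totient δ, ← Nat.card_eq_fintype_card,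
    ← Nat.card_eq_fintype_card, h1]
  rw [Nat.mul_div_cancel_left]
  have : 0 < Fintype.card (ZMod δ)ˣ := Fintype.card_pos
  simpa using this
end

section
/- Let k ≥ 2, let r > 1 be a proper divisor of k, and let n be a positive natural number. For each j ∈ ℕ the rational n/r^j is a terminating fractional to base k, and writing R_j for the digital root (base k) of the integer k^{ρ_j}·(n/r^j), where ρ_j is the minimal exponent with k^{ρ_j}·(n/r^j) ∈ ℤ, all the classes R̄_j in ℤ/(k−1)ℤ satisfy gcd(R_j, k−1) = gcd(R_0, k−1); i.e., they all lie in the same orbit of ℤ/(k−1)ℤ under multiplication by its units. -/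
/-- The base-`k` digit sum. -/
def digSum (k n : ℕ) : ℕ := (Nat.digits k n).sum

/-- The base-`k` digital root of a natural number (iterated digit sum). -/
def digRoot (k n : ℕ) : ℕ := (digSum k)^[n] n

/-- The digital root (base `k`) of a terminating fractional `q`, computed from
the integer `k ^ ρ * q`. -/
def fracDigRoot (k : ℕ) (q : ℚ) (ρ : ℕ) : ℕ :=
  digRoot k (((k : ℚ) ^ ρ * q).num.toNat)

lemma modEq_gcd_aux {a b n : ℕ} (h : a ≡ b [MOD n]) : Nat.gcd a n = Nat.gcd b n := by
  rw [Nat.gcd_comm a n, Nat.gcd_comm b n, Nat.gcd_rec n a, Nat.gcd_rec n b, h]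

lemma digSum_modEq (k : ℕ) (hk : 2 ≤ k) (a : ℕ) : digSum k a ≡ a [MOD k - 1] := by
  rcases eq_or_lt_of_le hk with h | h
  · have : k - 1 = 1 := by omega
    rw [this]
    exact Nat.modEq_one
  · have hmod : k % (k - 1) = 1 := by
      have h1 : k - 1 + 1 = k := by omega
      have h2 : (1 : ℕ) < k - 1 := by omega
      calc k % (k - 1) = (k - 1 + 1) % (k - 1) := by rw [h1]
        _ = 1 % (k - 1) := Nat.add_mod_left _ _
        _ = 1 := Nat.mod_eq_of_lt h2
    exact (Nat.modEq_digits_sum (k - 1) k hmod a).symm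

lemma digSum_iter_modEq (k : ℕ) (hk : 2 ≤ k) (t a : ℕ) :
    (digSum k)^[t] a ≡ a [MOD k - 1] := by
  induction t generalizing a with
  | zero => rfl
  | succ t ih =>
    rw [Function.iterate_succ_apply]
    exact (ih (digSum k a)).trans (digSum_modEq k hk a)

lemma key_lemma (k r n s j ρ : ℕ) (hk : 2 ≤ k) (hr : 0 < r) (hn : 0 < n)
    (hcop : Nat.Coprime r (k - 1))
    (hden : ((k : ℚ) ^ ρ * ((n : ℚ) / (r : ℚ) ^ j)).den = 1) :
    Nat.gcd (fracDigRoot k ((n : ℚ) / (r : ℚ) ^ j) ρ) (k - 1) = Nat.gcd n (k - 1) := by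
  set q : ℚ := (k : ℚ) ^ ρ * ((n : ℚ) / (r : ℚ) ^ j) with hq
  have hqnum : (q.num : ℚ) = q := (Rat.den_eq_one_iff q).mp hden
  have hr0 : (r : ℚ) ≠ 0 := by positivity
  have hmulQ : (q.num : ℚ) * (r : ℚ) ^ j = (k : ℚ) ^ ρ * (n : ℚ) := by
    rw [hqnum, hq]
    field_simp
  have hmulZ : q.num * (r : ℤ) ^ j = (k : ℤ) ^ ρ * (n : ℤ) := by
    exact_mod_cast hmulQ
  have hqnonneg : 0 ≤ q.num := by
    have : (0 : ℚ) ≤ q := by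
      rw [hq]
      positivity
    exact Rat.num_nonneg.mpr this
  set m : ℕ := q.num.toNat with hm
  have hmZ : (m : ℤ) = q.num := Int.toNat_of_nonneg hqnonneg
  have hmul : m * r ^ j = k ^ ρ * n := by
    have : (m : ℤ) * (r : ℤ) ^ j = (k : ℤ) ^ ρ * (n : ℤ) := by rw [hmZ]; exact hmulZ
    exact_mod_cast this
  have hcopk : Nat.Coprime k (k - 1) := by
    have h1 : k - 1 + 1 = k := by omega
    rw [← h1]
    simp [Nat.Coprime, Nat.gcd_self_add_left]
  have step1 : Nat.gcd (fracDigRoot k ((n : ℚ) / (r : ℚ) ^ j) ρ) (k - 1) = Nat.gcd m (k - 1) :=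
    modEq_gcd_aux (digSum_iter_modEq k hk m m)
  have step2 : Nat.gcd m (k - 1) = Nat.gcd (m * r ^ j) (k - 1) :=
    (Nat.Coprime.gcd_mul_right_cancel m (hcop.pow_left j)).symm
  have step3 : Nat.gcd (k ^ ρ * n) (k - 1) = Nat.gcd n (k - 1) :=
    Nat.Coprime.gcd_mul_left_cancel n (hcopk.pow_left ρ)
  rw [step1, step2, hmul, step3]

theorem stmt_17 (k r n : ℕ) (hk : 2 ≤ k) (hr1 : 1 < r) (hrk : r ∣ k) (hrk' : r ≠ k)
    (hn : 0 < n) :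
    (∀ j : ℕ, ∃ ρ : ℕ, ((k : ℚ) ^ ρ * ((n : ℚ) / (r : ℚ) ^ j)).den = 1) ∧
    ∀ ρ : ℕ → ℕ,
      (∀ j : ℕ, ((k : ℚ) ^ (ρ j) * ((n : ℚ) / (r : ℚ) ^ j)).den = 1 ∧
        ∀ ρ' < ρ j, ((k : ℚ) ^ ρ' * ((n : ℚ) / (r : ℚ) ^ j)).den ≠ 1) →
      ∀ j : ℕ,
        Nat.gcd (fracDigRoot k ((n : ℚ) / (r : ℚ) ^ j) (ρ j)) (k - 1) =
          Nat.gcd (fracDigRoot k ((n : ℚ) / (r : ℚ) ^ 0) (ρ 0)) (k - 1) := by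
  obtain ⟨s, hs⟩ := hrk
  have hr0 : (r : ℚ) ≠ 0 := by positivity
  have hrk : r ∣ k := ⟨s, hs⟩
  have hcop : Nat.Coprime r (k - 1) := by
    have hcopk : Nat.Coprime k (k - 1) := by
      have h1 : k - 1 + 1 = k := by omega
      rw [← h1]
      simp [Nat.Coprime, Nat.gcd_self_add_left]
    exact Nat.Coprime.coprime_dvd_left hrk hcopk
  constructor
  · intro j
    refine ⟨j, ?_⟩
    have : (k : ℚ) ^ j * ((n : ℚ) / (r : ℚ) ^ j) = ((n * s ^ j : ℕ) : ℚ) := by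
      push_cast [hs]
      field_simp
      ring
    rw [this, Rat.den_natCast]
  · intro ρ hρ j
    rw [key_lemma k r n s j (ρ j) hk (by omega) hn hcop (hρ j).1,
      key_lemma k r n s 0 (ρ 0) hk (by omega) hn hcop (hρ 0).1]
end

section
/- Let k ≥ 2, r > 1 a proper divisor of k, and q a nonzero terminating fractional to base k whose digital root is divisible by k−1 (equivalently equals k−1). Then the digital root of q/r is also divisible by k−1. -/
lemma iter_digSum_modEq (k : ℕ) (hk : 2 ≤ k) (m n : ℕ) :
    (digSum k)^[m] n ≡ n [MOD k - 1] := by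
  rcases eq_or_lt_of_le hk with h | h
  · subst h; simp [Nat.ModEq, Nat.mod_one]
  · induction m generalizing n with
    | zero => rfl
    | succ m ih =>
      rw [Function.iterate_succ_apply]
      exact (ih (digSum k n)).trans
        ((Nat.modEq_digits_sum (k - 1) k (by
          have h3 : (k - 1 + 1) % (k - 1) = 1 := by
            rw [Nat.add_mod_left]; exact Nat.mod_eq_of_lt (by omega)
          rwa [show k - 1 + 1 = k from by omega] at h3) n).symm)

lemma digRoot_modEq (k : ℕ) (hk : 2 ≤ k) (n : ℕ) : digRoot k n ≡ n [MOD k - 1] :=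
  iter_digSum_modEq k hk n n

theorem stmt_18 (k r : ℕ) (hk : 2 ≤ k) (hr1 : 1 < r) (hrk : r ∣ k) (hrk' : r ≠ k)
    (q : ℚ) (hq : 0 < q) (ρ₀ ρ₁ : ℕ)
    (h0 : ((k : ℚ) ^ ρ₀ * q).den = 1 ∧ ∀ ρ < ρ₀, ((k : ℚ) ^ ρ * q).den ≠ 1)
    (h1 : ((k : ℚ) ^ ρ₁ * (q / (r : ℚ))).den = 1 ∧
      ∀ ρ < ρ₁, ((k : ℚ) ^ ρ * (q / (r : ℚ))).den ≠ 1)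
    (hdr : (k - 1) ∣ fracDigRoot k q ρ₀) :
    (k - 1) ∣ fracDigRoot k (q / (r : ℚ)) ρ₁ := by
  set n₀ : ℤ := ((k : ℚ) ^ ρ₀ * q).num with hn₀
  set n₁ : ℤ := ((k : ℚ) ^ ρ₁ * (q / (r : ℚ))).num with hn₁
  have hr0 : (r : ℚ) ≠ 0 := by positivity
  have hq0 : (0:ℚ) < (k : ℚ) ^ ρ₀ * q := by positivity
  have hq1 : (0:ℚ) < (k : ℚ) ^ ρ₁ * (q / (r : ℚ)) := by positivity
  have hn₀pos : 0 < n₀ := Rat.num_pos.mpr hq0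
  have hn₁pos : 0 < n₁ := Rat.num_pos.mpr hq1
  have e0 : ((n₀ : ℚ)) = (k : ℚ) ^ ρ₀ * q := by
    have := Rat.num_div_den ((k : ℚ) ^ ρ₀ * q)
    rw [h0.1] at this; simpa [hn₀] using this
  have e1 : ((n₁ : ℚ)) = (k : ℚ) ^ ρ₁ * (q / (r : ℚ)) := by
    have := Rat.num_div_den ((k : ℚ) ^ ρ₁ * (q / (r : ℚ)))
    rw [h1.1] at this; simpa [hn₁] using this
  have key : (r : ℤ) * n₁ * (k : ℤ) ^ ρ₀ = n₀ * (k : ℤ) ^ ρ₁ := by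
    have : (((r : ℤ) * n₁ * (k : ℤ) ^ ρ₀ : ℤ) : ℚ) = ((n₀ * (k : ℤ) ^ ρ₁ : ℤ) : ℚ) := by
      push_cast
      rw [e0, e1]
      field_simp
    exact_mod_cast this
  -- divisibility of n₀ from hdr
  have hdig0 : (k - 1) ∣ n₀.toNat :=
    (Nat.modEq_zero_iff_dvd).mp
      (((digRoot_modEq k hk n₀.toNat).symm).trans ((Nat.modEq_zero_iff_dvd).mpr hdr))
  have hdvd0 : ((k : ℤ) - 1) ∣ n₀ := by
    have : ((k - 1 : ℕ) : ℤ) ∣ (n₀.toNat : ℤ) := Int.natCast_dvd_natCast.mpr hdig0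
    rwa [Int.toNat_of_nonneg hn₀pos.le, Nat.cast_sub (by omega), Nat.cast_one] at this
  have hkmod : (k : ℤ) ≡ 1 [ZMOD ((k : ℤ) - 1)] :=
    (Int.modEq_iff_dvd.mpr ⟨-1, by ring⟩)
  have hpow0 : (k : ℤ) ^ ρ₀ ≡ 1 [ZMOD ((k : ℤ) - 1)] := by
    simpa using hkmod.pow ρ₀
  have hpow1 : (k : ℤ) ^ ρ₁ ≡ 1 [ZMOD ((k : ℤ) - 1)] := by
    simpa using hkmod.pow ρ₁
  have hrn : ((k : ℤ) - 1) ∣ (r : ℤ) * n₁ := by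
    have c1 : (r : ℤ) * n₁ ≡ (r : ℤ) * n₁ * (k : ℤ) ^ ρ₀ [ZMOD ((k : ℤ) - 1)] := by
      calc (r : ℤ) * n₁ = (r : ℤ) * n₁ * 1 := by ring
        _ ≡ (r : ℤ) * n₁ * (k : ℤ) ^ ρ₀ [ZMOD ((k : ℤ) - 1)] :=
          Int.ModEq.mul_left _ hpow0.symm
    have c2 : n₀ * (k : ℤ) ^ ρ₁ ≡ n₀ * 1 [ZMOD ((k : ℤ) - 1)] :=
      Int.ModEq.mul_left _ hpow1
    have c3 : (r : ℤ) * n₁ ≡ n₀ [ZMOD ((k : ℤ) - 1)] := by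
      calc (r : ℤ) * n₁ ≡ (r : ℤ) * n₁ * (k : ℤ) ^ ρ₀ [ZMOD ((k : ℤ) - 1)] := c1
        _ = n₀ * (k : ℤ) ^ ρ₁ := key
        _ ≡ n₀ * 1 [ZMOD ((k : ℤ) - 1)] := c2
        _ = n₀ := by ring
    have c4 : (r : ℤ) * n₁ ≡ 0 [ZMOD ((k : ℤ) - 1)] :=
      c3.trans ((Int.modEq_zero_iff_dvd).mpr hdvd0)
    exact (Int.modEq_zero_iff_dvd).mp c4
  have hcastk : ((k - 1 : ℕ) : ℤ) = (k : ℤ) - 1 := by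
    rw [Nat.cast_sub (by omega), Nat.cast_one]
  have hkk1 : Nat.Coprime (k - 1) k := by
    rcases eq_or_lt_of_le hk with h | h
    · subst h; decide
    · have hm : k % (k - 1) = 1 := by
        have h3 : (k - 1 + 1) % (k - 1) = 1 := by
          rw [Nat.add_mod_left]; exact Nat.mod_eq_of_lt (by omega)
        rwa [show k - 1 + 1 = k from by omega] at h3
      unfold Nat.Coprime
      rw [Nat.gcd_rec (k - 1) k, hm, Nat.gcd_one_left]
  have hcr : Nat.Coprime (k - 1) r := Nat.Coprime.coprime_dvd_right hrk hkk1
  have hcop : IsCoprime ((k : ℤ) - 1) (r : ℤ) := by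
    rw [Int.isCoprime_iff_gcd_eq_one, ← hcastk, Int.gcd_natCast_natCast]
    exact hcr
  have hn1dvd : ((k : ℤ) - 1) ∣ n₁ := hcop.dvd_of_dvd_mul_left hrn
  have hnat : (k - 1) ∣ n₁.toNat := by
    have : ((k - 1 : ℕ) : ℤ) ∣ (n₁.toNat : ℤ) := by
      rw [hcastk, Int.toNat_of_nonneg hn₁pos.le]; exact hn1dvd
    exact_mod_cast this
  exact (Nat.modEq_zero_iff_dvd).mp
    ((digRoot_modEq k hk n₁.toNat).trans ((Nat.modEq_zero_iff_dvd).mpr hnat))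
end

section
/- Let k ≥ 2, and let n/s be a reduced fraction with n ≥ 1, s ≥ 2, where s = (product of primes dividing k raised to some powers) · p with p ≥ 2 satisfying gcd(p, k) = gcd(p, k−1) = 1. Then n/s is a repeating fractional in base k (no k^ρ·(n/s) is an integer), and if T is the period length of its base-k expansion and N = ∑_{m=0}^{T−1} a_{−ρ₀−1−m} k^{T−1−m} is the natural number formed by one period of the repetend, then the digit sum (and hence the digital root) of N is divisible by k−1. -/
lemma digSum_dvd_aux (k m : ℕ) (hk : 2 ≤ k) (h : (k - 1) ∣ m) :
    (k - 1) ∣ (Nat.digits k m).sum := by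
  rcases eq_or_lt_of_le hk with hk2 | hk3
  · simp [← hk2]
  · have hmod : k % (k - 1) = 1 := by
      rw [Nat.mod_eq_sub_mod (by omega), show k - (k - 1) = 1 by omega,
        Nat.mod_eq_of_lt (by omega)]
    have hme := Nat.modEq_digits_sum (k - 1) k hmod m
    have : (Nat.digits k m).sum ≡ 0 [MOD k - 1] :=
      hme.symm.trans ((Nat.modEq_zero_iff_dvd).mpr h)
    exact (Nat.modEq_zero_iff_dvd).mp this

lemma digSum_iter_dvd (k : ℕ) (hk : 2 ≤ k) (i : ℕ) :
    ∀ m : ℕ, (k - 1) ∣ m → (k - 1) ∣ (digSum k)^[i] m := by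
  induction i with
  | zero => intro m hm; simpa using hm
  | succ i ih =>
      intro m hm
      rw [Function.iterate_succ_apply]
      exact ih _ (digSum_dvd_aux k m hk hm)

theorem stmt_19 (k n s b p : ℕ) (hk : 2 ≤ k) (hn : 1 ≤ n) (hs : 2 ≤ s)
    (hns : Nat.Coprime n s)
    (hsbp : s = b * p) (hb : ∀ q : ℕ, q.Prime → q ∣ b → q ∣ k)
    (hp : 2 ≤ p) (hpk : Nat.gcd p k = 1) (hpk1 : Nat.gcd p (k - 1) = 1) :
    -- `n / s` is a repeating fractional in base `k`:
    (∀ ρ : ℕ, ¬ ∃ z : ℤ, (k : ℚ) ^ ρ * ((n : ℚ) / (s : ℚ)) = (z : ℚ)) ∧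
    -- and the digit sum and digital root of the repetend are divisible by `k - 1`:
    ∀ (a : ℕ → ℕ) (pi : ℤ) (ρ₀ j₀ T : ℕ),
      (∀ j : ℕ, a j ≤ k - 1) →
      HasSum (fun j : ℕ => (a j : ℝ) * (k : ℝ) ^ (pi - (j : ℤ))) ((n : ℝ) / (s : ℝ)) →
      (∀ N : ℕ, ∃ j > N, a j ≠ 0) →
      1 ≤ T →
      pi - (j₀ : ℤ) = -(ρ₀ : ℤ) - 1 →
      (∀ j : ℕ, j₀ ≤ j → a (j + T) = a j) →
      (k - 1) ∣ (Nat.digits k (∑ m ∈ Finset.range T, a (j₀ + m) * k ^ (T - 1 - m))).sum ∧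
      (k - 1) ∣ digRoot k (∑ m ∈ Finset.range T, a (j₀ + m) * k ^ (T - 1 - m)) := by
  have hps : p ∣ s := ⟨b, by rw [hsbp, mul_comm]⟩
  have hb0 : b ≠ 0 := by
    rintro rfl
    rw [hsbp, zero_mul] at hs
    omega
  -- coprimality of `s` with `k - 1`
  have hbk1 : Nat.Coprime b (k - 1) := by
    by_contra hcon
    have hq : (Nat.gcd b (k - 1)).minFac.Prime := Nat.minFac_prime hcon
    have hqb : (Nat.gcd b (k - 1)).minFac ∣ b :=
      (Nat.minFac_dvd _).trans (Nat.gcd_dvd_left _ _)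
    have hqk1 : (Nat.gcd b (k - 1)).minFac ∣ k - 1 :=
      (Nat.minFac_dvd _).trans (Nat.gcd_dvd_right _ _)
    have hqk : (Nat.gcd b (k - 1)).minFac ∣ k := hb _ hq hqb
    have hone : (Nat.gcd b (k - 1)).minFac ∣ 1 := by
      have := Nat.dvd_sub hqk hqk1
      simpa [show k - (k - 1) = 1 by omega] using this
    have h1 := Nat.dvd_one.mp hone
    have h2 := hq.two_le
    omega
  have hsk1 : Nat.Coprime s (k - 1) := by
    rw [hsbp]
    exact Nat.Coprime.mul hbk1 hpk1
  constructor
  · -- no power of k makes n/s an integer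
    rintro ρ ⟨z, hz⟩
    have hsQ : (s : ℚ) ≠ 0 := Nat.cast_ne_zero.mpr (by omega)
    have hZ : ((k ^ ρ * n : ℕ) : ℚ) = (z : ℚ) * (s : ℚ) := by
      push_cast
      field_simp at hz
      linarith [hz]
    have hZ' : ((k ^ ρ * n : ℕ) : ℤ) = z * (s : ℤ) := by exact_mod_cast hZ
    have hsd : (s : ℤ) ∣ ((k ^ ρ * n : ℕ) : ℤ) := ⟨z, by rw [hZ']; ring⟩
    have hsd' : s ∣ k ^ ρ * n := Int.ofNat_dvd.mp hsd
    have hpd : p ∣ k ^ ρ * n := hps.trans hsd'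
    have hpn : Nat.Coprime p n := (Nat.Coprime.coprime_dvd_left hps hns.symm)
    have hpkρ : Nat.Coprime p (k ^ ρ) := Nat.Coprime.pow_right ρ hpk
    have hcop : Nat.gcd p (k ^ ρ * n) = 1 := hpkρ.mul_right hpn
    have hd1 : p ∣ 1 := hcop ▸ Nat.dvd_gcd dvd_rfl hpd
    have := Nat.dvd_one.mp hd1
    omega
  · intro a pi ρ₀ j₀ T hbound hsum hinf hT hpi hper
    set N := ∑ m ∈ Finset.range T, a (j₀ + m) * k ^ (T - 1 - m) with hN
    suffices hdvd : (k - 1) ∣ N by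
      exact ⟨digSum_dvd_aux k N hk hdvd, digSum_iter_dvd k hk N N hdvd⟩
    have hk0 : (k : ℝ) ≠ 0 := Nat.cast_ne_zero.mpr (by omega)
    set f : ℕ → ℝ := fun j => (a j : ℝ) * (k : ℝ) ^ (pi - (j : ℤ)) with hf
    set C := ∑ j ∈ Finset.range j₀, f j with hC
    have hy : HasSum (fun j => f (j + j₀)) ((n : ℝ) / (s : ℝ) - C) := by
      rw [hasSum_nat_add_iff j₀, sub_add_cancel]
      exact hsum
    set D := ∑ j ∈ Finset.range T, f (j + j₀) with hD
    have h2 : HasSum (fun j => f (j + T + j₀)) (((n : ℝ) / s - C) - D) := by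
      have := (hasSum_nat_add_iff (f := fun j => f (j + j₀)) T).mpr
        (by rw [sub_add_cancel]; exact hy)
      exact this
    have key : ∀ j : ℕ, f (j + T + j₀) = f (j + j₀) * (k : ℝ) ^ (-(T : ℤ)) := by
      intro j
      have ha : a (j + T + j₀) = a (j + j₀) := by
        have := hper (j + j₀) (Nat.le_add_left _ _)
        rwa [show j + T + j₀ = j + j₀ + T by ring]
      simp only [hf]
      rw [ha, mul_assoc, ← zpow_add₀ hk0]
      congr 1
      push_cast
      ring
    have h3 : HasSum (fun j => f (j + T + j₀)) (((n : ℝ) / s - C) * (k : ℝ) ^ (-(T : ℤ))) := by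
      have h3p := hy.mul_right ((k : ℝ) ^ (-(T : ℤ)))
      rw [show (fun j => f (j + j₀) * (k : ℝ) ^ (-(T : ℤ)))
        = fun j => f (j + T + j₀) from funext fun j => (key j).symm] at h3p
      exact h3p
    have heq : ((n : ℝ) / s - C) * (k : ℝ) ^ (-(T : ℤ)) = ((n : ℝ) / s - C) - D :=
      h3.unique h2
    rw [zpow_neg, zpow_natCast] at heq
    have hKT : (k : ℝ) ^ T ≠ 0 := pow_ne_zero _ hk0
    have heq' : ((n : ℝ) / s - C) = (((n : ℝ) / s - C) - D) * (k : ℝ) ^ T := by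
      have h4 := congrArg (fun x => x * (k : ℝ) ^ T) heq
      simpa [mul_assoc, inv_mul_cancel₀ hKT] using h4
    set M := ∑ j ∈ Finset.range j₀, a j * k ^ (j₀ - 1 - j) with hM
    have hCM : C * (k : ℝ) ^ ρ₀ = (M : ℝ) := by
      rw [hC, hM, Finset.sum_mul]
      push_cast
      refine Finset.sum_congr rfl fun j hj => ?_
      have hj' : j < j₀ := Finset.mem_range.mp hj
      simp only [hf]
      rw [mul_assoc]
      congr 1
      rw [← zpow_natCast (k : ℝ) ρ₀, ← zpow_add₀ hk0, ← zpow_natCast (k : ℝ) (j₀ - 1 - j)]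
      congr 1
      omega
    have hDN : D * (k : ℝ) ^ (ρ₀ + T) = (N : ℝ) := by
      rw [hD, hN, Finset.sum_mul]
      push_cast
      refine Finset.sum_congr rfl fun m hm => ?_
      have hm' : m < T := Finset.mem_range.mp hm
      simp only [hf]
      rw [show j₀ + m = m + j₀ by ring, mul_assoc]
      congr 1
      rw [← zpow_natCast (k : ℝ) (ρ₀ + T), ← zpow_add₀ hk0, ← zpow_natCast (k : ℝ) (T - 1 - m)]
      congr 1
      omega
    have hs0 : (s : ℝ) ≠ 0 := Nat.cast_ne_zero.mpr (by omega)
    have hn' : (n : ℝ) = s * (C + ((n : ℝ) / s - C)) := by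
      field_simp
      ring
    have hfinal : (n : ℝ) * (k : ℝ) ^ ρ₀ * ((k : ℝ) ^ T - 1)
        = (s : ℝ) * ((M : ℝ) * ((k : ℝ) ^ T - 1) + (N : ℝ)) := by
      rw [hn', ← hCM, ← hDN]
      have hpow : (k : ℝ) ^ (ρ₀ + T) = (k : ℝ) ^ ρ₀ * (k : ℝ) ^ T := pow_add _ _ _
      rw [hpow]
      linear_combination (-(s : ℝ) * (k : ℝ) ^ ρ₀) * heq'
    have hcast : ((k ^ T - 1 : ℕ) : ℝ) = (k : ℝ) ^ T - 1 := by
      rw [Nat.cast_sub (Nat.one_le_pow _ _ (by omega))]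
      push_cast
      ring
    have hnat : n * k ^ ρ₀ * (k ^ T - 1) = s * (M * (k ^ T - 1) + N) := by
      rw [← hcast] at hfinal
      exact_mod_cast hfinal
    have hdvdKT : (k - 1) ∣ k ^ T - 1 := by
      simpa using Nat.sub_dvd_pow_sub_pow k 1 T
    have h1 : (k - 1) ∣ s * M * (k ^ T - 1) + s * N := by
      have : s * (M * (k ^ T - 1) + N) = s * M * (k ^ T - 1) + s * N := by ring
      rw [← this, ← hnat]
      exact Dvd.dvd.mul_left hdvdKT _
    have h2' : (k - 1) ∣ s * N :=
      (Nat.dvd_add_right (Dvd.dvd.mul_left hdvdKT _)).mp h1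
    exact (hsk1.symm).dvd_of_dvd_mul_left h2'
end
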